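/- arXiv:1201.4844 — 2 statements merged into one kernel-verified Lean document; each statement's English description precedes it below -/
import Mathlib

section
/- Let A be a unital C*-algebra satisfying: (1) there exists a constant v₀ > 0 such that every x ∈ A can be written as a linear combination x = ∑_{j=1}^n t_j p_j of projections p_j ∈ A with complex coefficients t_j satisfying ∑_{j=1}^n |t_j| ≤ v₀‖x‖; and (2) the set of positive combinations of projections of A is norm dense in the positive cone A₊. Then every positive invertible element of A is a positive combination of projections in A. -/
/-!
Since `x` is positive and invertible, `c ≤ x` for some `c > 0`. Approximate `x - c ≥ 0` by a
positive combination `y` to within `c / v₀`. The self-adjoint error `z = x - c - y` is then a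
combination of projections with real coefficients of total modulus `< c`, and `c + z` is a
positive combination because `r p + |r| = |r| (1 - p)` whenever `r < 0`. Hence so is
`x = y + (c + z)`.
-/

open Complex ComplexConjugate

lemma isStarProjection_iff_eq_star_and_mul_self {R : Type*} [Mul R] [Star R] {p : R} :
    IsStarProjection p ↔ p = star p ∧ p * p = p :=
  isStarProjection_iff'.trans ⟨fun h => ⟨h.2.symm, h.1⟩, fun h => ⟨h.2, h.1.symm⟩⟩

def IsPosCombOfProjections {A : Type*} [Mul A] [Star A] [AddCommMonoid A] [Module ℂ A]
    (y : A) : Prop :=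
  ∃ (n : ℕ) (t : Fin n → ℝ) (p : Fin n → A), (∀ j, 0 < t j) ∧
    (∀ j, p j = star (p j) ∧ p j * p j = p j) ∧ y = ∑ j, (t j : ℂ) • p j

namespace IsPosCombOfProjections

section Basic

variable {A : Type*} [Mul A] [Star A] [AddCommMonoid A] [Module ℂ A]

theorem zero : IsPosCombOfProjections (0 : A) :=
  ⟨0, finZeroElim, finZeroElim, finZeroElim, finZeroElim, by simp⟩

theorem ofReal_smul {r : ℝ} (hr : 0 ≤ r) {p : A} (hp : IsStarProjection p) :
    IsPosCombOfProjections ((r : ℂ) • p) := by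
  rcases hr.eq_or_lt with rfl | hr
  · simpa using zero
  · exact ⟨1, fun _ => r, fun _ => p, fun _ => hr,
      fun _ => isStarProjection_iff_eq_star_and_mul_self.1 hp, by simp⟩

theorem add {y z : A} (hy : IsPosCombOfProjections y) (hz : IsPosCombOfProjections z) :
    IsPosCombOfProjections (y + z) := by
  obtain ⟨n, t, p, ht, hp, rfl⟩ := hy
  obtain ⟨m, s, q, hs, hq, rfl⟩ := hz
  refine ⟨n + m, Fin.append t s, Fin.append p q, fun j => ?_, fun j => ?_, ?_⟩
  · cases j using Fin.addCases <;> simp [ht, hs]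
  · cases j using Fin.addCases
    · rw [Fin.append_left]; exact hp _
    · rw [Fin.append_right]; exact hq _
  · simp [Fin.sum_univ_add]

theorem sum {ι : Type*} (s : Finset ι) {f : ι → A} (h : ∀ i ∈ s, IsPosCombOfProjections (f i)) :
    IsPosCombOfProjections (∑ i ∈ s, f i) := by
  classical
  induction s using Finset.induction_on with
  | empty => simpa using zero
  | insert i s hi ih =>
    rw [Finset.sum_insert hi]
    exact (h i (s.mem_insert_self i)).add (ih fun j hj => h j (Finset.mem_insert_of_mem hj))

end Basic

theorem isSelfAdjoint {A : Type*} [Mul A] [AddCommMonoid A] [StarAddMonoid A] [Module ℂ A]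
    [StarModule ℂ A] {y : A} (hy : IsPosCombOfProjections y) : IsSelfAdjoint y := by
  obtain ⟨n, t, p, -, hp, rfl⟩ := hy
  refine isSelfAdjoint_sum _ fun j _ => ?_
  exact .smul (conj_ofReal _) (hp j).1.symm

end IsPosCombOfProjections

section Ring

variable {A : Type*} [Ring A] [StarRing A] [Module ℂ A]

theorem isPosCombOfProjections_smul_add_abs_smul_one (r : ℝ) {p : A} (hp : IsStarProjection p) :
    IsPosCombOfProjections ((r : ℂ) • p + ((|r| : ℝ) : ℂ) • 1) := by
  rcases le_or_gt 0 r with hr | hr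
  · rw [abs_of_nonneg hr]
    exact (IsPosCombOfProjections.ofReal_smul hr hp).add (.ofReal_smul hr (.one A))
  · have : (r : ℂ) • p + ((|r| : ℝ) : ℂ) • 1 = ((-r : ℝ) : ℂ) • (1 - p) := by
      rw [abs_of_neg hr, smul_sub]; push_cast; rw [neg_smul, neg_smul]; abel
    rw [this]
    exact .ofReal_smul (by linarith) hp.one_sub

theorem isPosCombOfProjections_smul_one_add_sum {ι : Type*} (s : Finset ι) {c : ℝ}
    {r : ι → ℝ} {p : ι → A} (hp : ∀ i, IsStarProjection (p i)) (hr : ∑ i ∈ s, |r i| < c) :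
    IsPosCombOfProjections ((c : ℂ) • 1 + ∑ i ∈ s, (r i : ℂ) • p i) := by
  have : (c : ℂ) • (1 : A) + ∑ i ∈ s, (r i : ℂ) • p i =
      ((c - ∑ i ∈ s, |r i| : ℝ) : ℂ) • 1 + ∑ i ∈ s, ((r i : ℂ) • p i + ((|r i| : ℝ) : ℂ) • 1) := by
    push_cast
    rw [Finset.sum_add_distrib, ← Finset.sum_smul, sub_smul]
    abel
  rw [this]
  exact (IsPosCombOfProjections.ofReal_smul (by linarith) (.one A)).add
    (.sum s fun i _ => isPosCombOfProjections_smul_add_abs_smul_one (r i) (hp i))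

end Ring

theorem IsSelfAdjoint.eq_sum_re_smul {E ι : Type*} [AddCommGroup E] [Module ℂ E] [StarAddMonoid E]
    [StarModule ℂ E] {z : E} (hz : IsSelfAdjoint z) (s : Finset ι) {t : ι → ℂ} {p : ι → E}
    (hp : ∀ i, IsSelfAdjoint (p i)) (h : z = ∑ i ∈ s, t i • p i) :
    z = ∑ i ∈ s, ((t i).re : ℂ) • p i := by
  have h2 : (2 : ℂ) • z = (2 : ℂ) • ∑ i ∈ s, ((t i).re : ℂ) • p i :=
    calc (2 : ℂ) • z = z + star z := by rw [hz.star_eq, two_smul]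
      _ = ∑ i ∈ s, (t i + conj (t i)) • p i := by
        rw [h, star_sum, ← Finset.sum_add_distrib]
        refine Finset.sum_congr rfl fun i _ => ?_
        rw [star_smul, (hp i).star_eq, add_smul, Complex.star_def]
      _ = (2 : ℂ) • ∑ i ∈ s, ((t i).re : ℂ) • p i := by
        rw [Finset.smul_sum]
        refine Finset.sum_congr rfl fun i _ => ?_
        rw [add_conj, smul_smul]
        push_cast; ring_nf
  exact smul_right_injective E two_ne_zero h2

theorem IsStrictlyPositive.exists_pos_algebraMap_le {A : Type*} [TopologicalSpace A] [Ring A]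
    [StarRing A] [PartialOrder A] [StarOrderedRing A] [Algebra ℝ A] [NonnegSpectrumClass ℝ A]
    [ContinuousFunctionalCalculus ℝ A IsSelfAdjoint] {a : A} (ha : IsStrictlyPositive a) :
    ∃ c > 0, algebraMap ℝ A c ≤ a := by
  rcases subsingleton_or_nontrivial A with _ | _
  · exact ⟨1, one_pos, (Subsingleton.elim _ _).le⟩
  · exact (CFC.exists_pos_algebraMap_le_iff ha.isSelfAdjoint).2 fun _ => ha.spectrum_pos

/-- In a unital C*-algebra possessing a universal constant `v₀` (bounding the sum of the moduli
of coefficients in decompositions into linear combinations of projections) and in which positive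
combinations of projections are norm dense in the positive cone, every positive invertible
element is a positive combination of projections. -/
theorem positive_invertible_is_positive_combination_of_v0_and_CP
    {A : Type*} [CStarAlgebra A] [PartialOrder A] [StarOrderedRing A]
    (h1 : ∃ v₀ : ℝ, 0 < v₀ ∧ ∀ x : A, ∃ (n : ℕ) (t : Fin n → ℂ) (p : Fin n → A),
      (∀ j, p j = star (p j) ∧ p j * p j = p j) ∧ x = ∑ j, t j • p j ∧
      ∑ j, ‖t j‖ ≤ v₀ * ‖x‖)
    (h2 : ∀ a : A, 0 ≤ a → a ∈ closure {y : A |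
      ∃ (n : ℕ) (t : Fin n → ℝ) (p : Fin n → A), (∀ j, 0 < t j) ∧
        (∀ j, p j = star (p j) ∧ p j * p j = p j) ∧ y = ∑ j, (t j : ℂ) • p j})
    (x : A) (hx : 0 ≤ x) (hx_inv : IsUnit x) :
    ∃ (n : ℕ) (t : Fin n → ℝ) (p : Fin n → A), (∀ j, 0 < t j) ∧
      (∀ j, p j = star (p j) ∧ p j * p j = p j) ∧ x = ∑ j, (t j : ℂ) • p j := by
  obtain ⟨v₀, hv₀, h_decomp⟩ := h1
  obtain ⟨c, hc, hcx⟩ := (hx_inv.isStrictlyPositive hx).exists_pos_algebraMap_le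
  obtain ⟨y, hy, hxy⟩ :=
    Metric.mem_closure_iff.mp (h2 _ (sub_nonneg.2 hcx)) (c / v₀) (by positivity)
  change IsPosCombOfProjections y at hy
  set z := x - algebraMap ℝ A c - y
  obtain ⟨n, t, p, hp, hz, ht⟩ := h_decomp z
  have hp' : ∀ j, IsStarProjection (p j) := fun j =>
    isStarProjection_iff_eq_star_and_mul_self.2 (hp j)
  have hz_sa : IsSelfAdjoint z :=
    (hx.isSelfAdjoint.sub (.algebraMap A (.all c))).sub hy.isSelfAdjoint
  have hre : ∑ j, |(t j).re| < c :=
    calc ∑ j, |(t j).re| ≤ ∑ j, ‖t j‖ := Finset.sum_le_sum fun j _ => abs_re_le_norm _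
      _ ≤ v₀ * ‖z‖ := ht
      _ < v₀ * (c / v₀) := by rw [← dist_eq_norm]; gcongr
      _ = c := by field_simp
  have hx_eq : x = y + ((c : ℂ) • 1 + z) := by
    rw [Complex.coe_smul, ← Algebra.algebraMap_eq_smul_one]
    simp only [z]
    abel
  rw [hx_eq, hz_sa.eq_sum_re_smul _ (fun j => (hp' j).isSelfAdjoint) hz]
  exact hy.add (isPosCombOfProjections_smul_one_add_sum _ hp' hre)
end

section
/- Let A be a C*-algebra containing two projections p, q with pq = 0 and q ≺ p (Murray–von Neumann subequivalence), such that for every projection r ∈ A with r ≤ p (i.e., rp = pr = r), every positive element a of the corner rAr (a = rar) that is invertible in rAr (there is c ∈ A with c = rcr and ac = ca = r) is a positive combination of projections belonging to rAr. Let t be a real number and b ∈ A an element with b = qb = bq and t > ‖b‖, and suppose x := t·p + b is a positive element of A. Then x is a positive combination of projections in A. -/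
/-!
Write `q ∼ q' ≤ p` through `v` (`v⋆v = q`, `vv⋆ = q'`), put `c = √b` and let `k` be the inverse
square root of `t q + b` inside the corner `qAq` (computed in the unitization, where
`t + b` is invertible). Then `y = v (t q + b) v⋆` is positive and invertible in `q'Aq'`, hence
`y = ∑ tⱼ eⱼ` with projections `eⱼ ≤ q'`. For `m = √t v ± c` one has `m⋆m = t q + b`, so
`W = m k v⋆` satisfies `W⋆W = q'` and `m m⋆ = W y W⋆ = ∑ tⱼ W eⱼ W⋆`, a positive combination of
projections. Since `m₊m₊⋆ + m₋m₋⋆ = 2 (t q' + b)`, so is `t q' + b`, and therefore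
`x = t (p - q') + (t q' + b)`.
-/

open scoped CStarAlgebra

def IsPositiveCombination {M : Type*} [AddCommMonoid M] [Module ℂ M] (S : Set M) (x : M) :
    Prop :=
  ∃ (n : ℕ) (c : Fin n → ℝ) (e : Fin n → M), (∀ j, 0 < c j) ∧ (∀ j, e j ∈ S) ∧
    x = ∑ j, (c j : ℂ) • e j

namespace IsPositiveCombination

variable {M N : Type*} [AddCommMonoid M] [Module ℂ M] [AddCommMonoid N] [Module ℂ N]
  {S : Set M} {x y : M}

lemma of_mem {r : ℝ} (hr : 0 < r) {e : M} (he : e ∈ S) :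
    IsPositiveCombination S ((r : ℂ) • e) :=
  ⟨1, fun _ => r, fun _ => e, fun _ => hr, fun _ => he, by simp⟩

lemma add (hx : IsPositiveCombination S x) (hy : IsPositiveCombination S y) :
    IsPositiveCombination S (x + y) := by
  obtain ⟨n, c, e, hc, he, rfl⟩ := hx
  obtain ⟨m, d, f, hd, hf, rfl⟩ := hy
  refine ⟨n + m, Fin.append c d, Fin.append e f, Fin.addCases ?_ ?_, Fin.addCases ?_ ?_, ?_⟩ <;>
    simp [Fin.sum_univ_add, *]

lemma smul {r : ℝ} (hr : 0 < r) (hx : IsPositiveCombination S x) :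
    IsPositiveCombination S ((r : ℂ) • x) := by
  obtain ⟨n, c, e, hc, he, rfl⟩ := hx
  refine ⟨n, fun j => r * c j, e, fun j => mul_pos hr (hc j), he, ?_⟩
  simp [Finset.smul_sum, smul_smul]

lemma map (f : M →ₗ[ℂ] N) {T : Set N} (hf : Set.MapsTo f S T)
    (hx : IsPositiveCombination S x) : IsPositiveCombination T (f x) := by
  obtain ⟨n, c, e, hc, he, rfl⟩ := hx
  exact ⟨n, c, f ∘ e, hc, fun j => hf (he j), by simp⟩

end IsPositiveCombination

section StarRing

variable {R : Type*} [NonUnitalRing R] [StarRing R]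

lemma star_add_mul_add_of_star_mul_eq_zero {x y : R} (h : star x * y = 0) :
    star (x + y) * (x + y) = star x * x + star y * y := by
  have h' : star y * x = 0 := by simpa using congr_arg star h
  simp only [star_add, add_mul, mul_add, h, h', add_zero, zero_add]

lemma add_mul_star_add_add_sub_mul_star_sub (x y : R) :
    (x + y) * star (x + y) + (x - y) * star (x - y) = 2 • (x * star x + y * star y) := by
  simp only [star_add, star_sub, add_mul, mul_add, sub_mul, mul_sub]
  abel

lemma IsStarProjection.conj {e w : R} (he : IsStarProjection e) (hew : e * (star w * w) = e) :
    IsStarProjection (w * e * star w) where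
  isIdempotentElem :=
    calc w * e * star w * (w * e * star w) = w * (e * (star w * w) * e) * star w := by
          simp only [mul_assoc]
      _ = w * e * star w := by rw [hew, he.isIdempotentElem.eq]
  isSelfAdjoint := by
    rw [IsSelfAdjoint, star_mul, star_mul, star_star, he.isSelfAdjoint.star_eq, mul_assoc]

end StarRing

def IsUnitInCorner {A : Type*} [Mul A] (r a : A) : Prop :=
  a = r * a * r ∧ ∃ c, c = r * c * r ∧ a * c = r ∧ c * a = r

section CStarRing

variable {A : Type*} [NonUnitalNormedRing A] [StarRing A] [CStarRing A]

lemma CStarRing.mul_eq_self_of_star_mul_self_mul_eq {x q : A} (hq : IsStarProjection q)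
    (h : star x * x * q = star x * x) : x * q = x := by
  have h' : q * (star x * x) = star x * x := by
    simpa [mul_assoc, hq.isSelfAdjoint.star_eq] using congr_arg star h
  rw [← sub_eq_zero, ← star_mul_self_eq_zero_iff]
  calc star (x * q - x) * (x * q - x)
      = q * (star x * x) * q - q * (star x * x) - star x * x * q + star x * x := by
        rw [star_sub, star_mul, hq.isSelfAdjoint.star_eq]; noncomm_ring
    _ = 0 := by rw [h', h]; abel

lemma CStarRing.mul_eq_self_of_star_mul_self_eq {v q : A} (hq : IsStarProjection q)
    (hvv : star v * v = q) : v * q = v :=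
  mul_eq_self_of_star_mul_self_mul_eq hq (by rw [hvv, hq.isIdempotentElem.eq])

lemma isUnitInCorner_conj {q q' v k X : A} (hq : IsStarProjection q)
    (hq' : IsStarProjection q') (hvv : star v * v = q) (hvv' : v * star v = q')
    (hqk : q * k = k) (hkq : k * q = k) (hkX : Commute k X) (hkXk : k * X * k = q) :
    IsUnitInCorner q' (v * X * star v) := by
  have hvq : v * q = v := CStarRing.mul_eq_self_of_star_mul_self_eq hq hvv
  have hv'q' : star v * q' = star v :=
    CStarRing.mul_eq_self_of_star_mul_self_eq hq' (by rw [star_star, hvv'])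
  have hq'v : q' * v = v := by simpa [hq'.isSelfAdjoint.star_eq] using congr_arg star hv'q'
  refine ⟨?_, v * (k * k) * star v, ?_, ?_, ?_⟩
  · simp only [mul_assoc, hv'q']
    rw [← mul_assoc q', hq'v]
  · simp only [mul_assoc, hv'q']
    rw [← mul_assoc q', hq'v]
  · calc v * X * star v * (v * (k * k) * star v) = v * (k * X * k) * star v := by
          simp only [mul_assoc]
          rw [← mul_assoc (star v) v, hvv, ← mul_assoc q, hqk, ← mul_assoc X k, ← hkX.eq]
          simp only [mul_assoc]
      _ = q' := by rw [hkXk, hvq, hvv']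
  · calc v * (k * k) * star v * (v * X * star v) = v * (k * X * k) * star v := by
          simp only [mul_assoc]
          rw [← mul_assoc (star v) v, hvv, ← mul_assoc k q, hkq, ← mul_assoc k X, hkX.eq]
          simp only [mul_assoc]
      _ = q' := by rw [hkXk, hvq, hvv']

end CStarRing

lemma Unitization.inr_mul_eq_inr {R A : Type*} [CommRing R] [NonUnitalRing A] [Module R A]
    (a : A) (x : Unitization R A) : (a : Unitization R A) * x = ↑(x.fst • a + a * x.snd) := by
  ext <;> simp [add_comm]

lemma cfc_inv_sqrt_mul_const_add_mul {B : Type*} [CStarAlgebra B] [PartialOrder B]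
    [StarOrderedRing B] {b : B} (hb : 0 ≤ b) {t : ℝ} (ht : 0 < t) :
    cfc (fun l : ℝ => (√(t + l))⁻¹) b * (algebraMap ℝ B t + b) *
      cfc (fun l : ℝ => (√(t + l))⁻¹) b = 1 := by
  have hpos : ∀ l ∈ spectrum ℝ b, 0 < t + l := fun l hl => by
    linarith [spectrum_nonneg_of_nonneg hb hl]
  have hcont : ContinuousOn (fun l : ℝ => (√(t + l))⁻¹) (spectrum ℝ b) :=
    ContinuousOn.inv₀ (by fun_prop) fun l hl => (Real.sqrt_pos.2 (hpos l hl)).ne'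
  have hB : algebraMap ℝ B t + b = cfc (fun l => t + l) b := by
    rw [cfc_const_add t (fun l => l) b, cfc_id' ℝ b]
  rw [hB, ← cfc_mul _ _ b hcont, ← cfc_mul (fun l => (√(t + l))⁻¹ * (t + l)) _ b
    (hcont.mul (by fun_prop)) hcont, ← cfc_one ℝ b]
  refine cfc_congr fun l hl => ?_
  simp only [Pi.one_apply]
  field_simp
  rw [Real.sq_sqrt (hpos l hl).le, div_self (hpos l hl).ne']

section CStarAlgebra

variable {A : Type*} [NonUnitalCStarAlgebra A]

open Unitization in
lemma exists_corner_inv_sqrt [PartialOrder A] [StarOrderedRing A] {q b : A}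
    (hq : IsStarProjection q) (hb : 0 ≤ b) (hqb : q * b = b) (hbq : b * q = b) {t : ℝ}
    (ht : 0 < t) :
    ∃ k : A, IsSelfAdjoint k ∧ q * k = k ∧ k * q = k ∧ Commute k ((t : ℂ) • q + b) ∧
      k * ((t : ℂ) • q + b) * k = q := by
  set f : ℝ → ℝ := fun l => (√(t + l))⁻¹
  set K : A⁺¹ := cfc f (b : A⁺¹)
  set B : A⁺¹ := algebraMap ℝ A⁺¹ t + b
  have hqq : (q * q : A⁺¹) = q := by rw [← inr_mul, hq.isIdempotentElem.eq]
  have hK : star K = K := (cfc_predicate _ _ : IsSelfAdjoint K).star_eq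
  have hKBK : K * B * K = 1 := cfc_inv_sqrt_mul_const_add_mul (inr_nonneg_iff.2 hb) ht
  have hbq' : Commute (b : A⁺¹) q := by
    rw [Commute, SemiconjBy, ← inr_mul, ← inr_mul, hqb, hbq]
  have hqK : Commute (q : A⁺¹) K := (hbq'.cfc_real f).symm
  have hqB : Commute (q : A⁺¹) B :=
    (Algebra.commute_algebraMap_right _ _).add_right hbq'.symm
  have hKB : Commute K B :=
    (Algebra.commute_algebraMap_right _ _).add_right ((Commute.refl _).cfc_real f)
  have hX : (((t : ℂ) • q + b : A) : A⁺¹) = q * B := by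
    rw [Complex.coe_smul, mul_add, ← Algebra.commutes, ← Algebra.smul_def, ← inr_mul, hqb,
      inr_add, inr_smul]
  obtain ⟨k, hk⟩ : ∃ k : A, (k : A⁺¹) = q * K := ⟨_, (inr_mul_eq_inr q K).symm⟩
  refine ⟨k, ?_, ?_, ?_, ?_, ?_⟩ <;> apply inr_injective (R := ℂ)
  · rw [inr_star, hk, star_mul, hK, (hq.isSelfAdjoint.inr (R := ℂ)).star_eq, hqK.eq]
  · rw [inr_mul, hk, ← mul_assoc, hqq]
  · rw [inr_mul, hk, mul_assoc, ← hqK.eq, ← mul_assoc, hqq]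
  · rw [inr_mul, inr_mul, hk, hX]
    exact ((Commute.refl _).mul_right hqB).mul_left (hqK.symm.mul_right hKB) |>.eq
  · rw [inr_mul, inr_mul, hk, hX]
    calc (q : A⁺¹) * K * (q * B) * (q * K) = q * q * q * (K * B * K) := by
          rw [hqK.symm.mul_mul_mul_comm, (hqK.symm.mul_left hqB.symm).mul_mul_mul_comm]
      _ = q := by rw [hKBK, mul_one, hqq, hqq]

lemma isPositiveCombination_mul_star_self {q q' v m k X : A} (hq : IsStarProjection q)
    (hvv : star v * v = q) (hvv' : v * star v = q') (hmq : m * q = m) (hk : IsSelfAdjoint k)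
    (hqk : q * k = k) (hkq : k * q = k) (hmX : star m * m = X) (hkXk : k * X * k = q)
    (hy : IsPositiveCombination {e | IsStarProjection e ∧ e * q' = e} (v * X * star v)) :
    IsPositiveCombination {e : A | IsStarProjection e} (m * star m) := by
  have hvq : v * q = v := CStarRing.mul_eq_self_of_star_mul_self_eq hq hvv
  set W := m * k * star v
  have hWW : star W * W = q' :=
    calc star W * W = v * (k * (star m * m) * k) * star v := by
          simp only [W, star_mul, star_star, hk.star_eq, mul_assoc]
      _ = q' := by rw [hmX, hkXk, hvq, hvv']
  have hWy : W * (v * X * star v * star W) = m * star m :=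
    calc W * (v * X * star v * star W) = m * (k * q * X * q * k) * star m := by
          simp only [W, star_mul, star_star, hk.star_eq, mul_assoc, ← hvv]
      _ = m * star m := by rw [hkq, mul_assoc _ q, hqk, hkXk, hmq]
  simpa [hWy] using hy.map (LinearMap.mulLeft ℂ W ∘ₗ LinearMap.mulRight ℂ (star W))
    fun e he => by simpa [mul_assoc] using he.1.conj (w := W) (by rw [hWW, he.2])

lemma isPositiveCombination_smul_add [PartialOrder A] [StarOrderedRing A] {q q' v b k : A}
    {t : ℝ} (hq : IsStarProjection q) (hq' : IsStarProjection q') (hvv : star v * v = q)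
    (hvv' : v * star v = q') (hq'q : q' * q = 0) (hb : 0 ≤ b) (hbq : b * q = b) (ht : 0 < t)
    (hk : IsSelfAdjoint k) (hqk : q * k = k) (hkq : k * q = k)
    (hkXk : k * ((t : ℂ) • q + b) * k = q)
    (hy : IsPositiveCombination {e | IsStarProjection e ∧ e * q' = e}
      (v * ((t : ℂ) • q + b) * star v)) :
    IsPositiveCombination {e : A | IsStarProjection e} ((t : ℂ) • q' + b) := by
  have hvq : v * q = v := CStarRing.mul_eq_self_of_star_mul_self_eq hq hvv
  have hv'q' : star v * q' = star v :=
    CStarRing.mul_eq_self_of_star_mul_self_eq hq' (by rw [star_star, hvv'])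
  set c := CFC.sqrt b
  have hc : IsSelfAdjoint c := .of_nonneg (CFC.sqrt_nonneg b)
  have hcc : star c * c = b := by rw [hc.star_eq, CFC.sqrt_mul_sqrt_self b hb]
  have hcq : c * q = c := CStarRing.mul_eq_self_of_star_mul_self_mul_eq hq (by rw [hcc, hbq])
  have hqc : q * c = c := by
    simpa [hq.isSelfAdjoint.star_eq, hc.star_eq] using congr_arg star hcq
  have hvc : star v * c = 0 := by
    rw [← hv'q', ← hqc, mul_assoc, ← mul_assoc q', hq'q, zero_mul, mul_zero]
  set a : ℂ := ((√t : ℝ) : ℂ)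
  have haa : star a * a = t := by
    rw [Complex.star_def, Complex.conj_ofReal, ← Complex.ofReal_mul, Real.mul_self_sqrt ht.le]
  have hm : ∀ d : A, star v * d = 0 → star d * d = b → d * q = d →
      IsPositiveCombination {e : A | IsStarProjection e} ((a • v + d) * star (a • v + d)) :=
    fun d hvd hdd hdq => isPositiveCombination_mul_star_self hq hvv hvv'
      (by rw [add_mul, smul_mul_assoc, hvq, hdq]) hk hqk hkq
      (by rw [star_add_mul_add_of_star_mul_eq_zero
            (by rw [star_smul, smul_mul_assoc, hvd, smul_zero]),
          hdd, star_smul, smul_mul_smul_comm, haa, hvv])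
      hkXk hy
  have hsum := ((hm c hvc hcc hcq).add (hm (-c) (by rw [mul_neg, hvc, neg_zero])
    (by rw [star_neg, neg_mul_neg, hcc]) (by rw [neg_mul, hcq]))).smul (r := 1 / 2) (by norm_num)
  rw [← sub_eq_add_neg, add_mul_star_add_add_sub_mul_star_sub] at hsum
  convert hsum using 1
  rw [star_smul, smul_mul_smul_comm, hvv', mul_comm a, haa, hc.star_eq,
    CFC.sqrt_mul_sqrt_self b hb, two_nsmul, ← two_smul ℂ, smul_smul]
  norm_num

end CStarAlgebra

/-- Key lemma: if `q ≺ p` are orthogonal projections in a C*-algebra such that positive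
invertible elements of every corner `rAr` with `r ≤ p` are positive combinations of projections
in the corner, and `x = t·p + b` is positive with `b = qb = bq` and `t > ‖b‖`, then `x` is a
positive combination of projections. -/
theorem positive_combination_of_corner_decomposition
    {A : Type*} [NonUnitalCStarAlgebra A] [PartialOrder A] [StarOrderedRing A]
    (p q : A) (hp : p = star p ∧ p * p = p) (hq : q = star q ∧ q * q = q)
    (hpq : p * q = 0)
    (hsub : ∃ q' : A, (q' = star q' ∧ q' * q' = q') ∧ (q' * p = q' ∧ p * q' = q') ∧
      ∃ v : A, star v * v = q ∧ v * star v = q')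
    (hcorner : ∀ r : A, (r = star r ∧ r * r = r) → (r * p = r ∧ p * r = r) →
      ∀ a : A, 0 ≤ a → a = r * a * r →
        (∃ c : A, c = r * c * r ∧ a * c = r ∧ c * a = r) →
        ∃ (n : ℕ) (t : Fin n → ℝ) (e : Fin n → A), (∀ j, 0 < t j) ∧
          (∀ j, e j = star (e j) ∧ e j * e j = e j ∧ e j = r * e j * r) ∧
          a = ∑ j, (t j : ℂ) • e j)
    (t : ℝ) (b : A) (hb : b = q * b ∧ b = b * q) (htb : ‖b‖ < t)
    (x : A) (hx_def : x = (t : ℂ) • p + b) (hx_pos : 0 ≤ x) :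
    ∃ (n : ℕ) (c : Fin n → ℝ) (e : Fin n → A), (∀ j, 0 < c j) ∧
      (∀ j, e j = star (e j) ∧ e j * e j = e j) ∧ x = ∑ j, (c j : ℂ) • e j := by
  have hP : IsStarProjection p := ⟨hp.2, hp.1.symm⟩
  have hQ : IsStarProjection q := ⟨hq.2, hq.1.symm⟩
  obtain ⟨q', ⟨hq's, hq'q'⟩, ⟨hq'p, hpq'⟩, v, hvv, hvv'⟩ := hsub
  have hQ' : IsStarProjection q' := ⟨hq'q', hq's.symm⟩
  have ht : 0 < t := (norm_nonneg b).trans_lt htb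
  have hqp : q * p = 0 := by
    simpa [hP.isSelfAdjoint.star_eq, hQ.isSelfAdjoint.star_eq] using congr_arg star hpq
  have hb0 : 0 ≤ b := by
    simpa [hQ.isSelfAdjoint.star_eq, hx_def, mul_add, add_mul, mul_smul_comm, hqp, ← hb.1,
      ← hb.2] using star_left_conjugate_nonneg hx_pos q
  have hX : 0 ≤ (t : ℂ) • q + b := by
    rw [Complex.coe_smul]
    exact add_nonneg (smul_nonneg ht.le hQ.nonneg) hb0
  obtain ⟨k, hk, hqk, hkq, hkX, hkXk⟩ := exists_corner_inv_sqrt hQ hb0 hb.1.symm hb.2.symm ht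
  obtain ⟨hy, hy_inv⟩ := isUnitInCorner_conj hQ hQ' hvv hvv' hqk hkq hkX hkXk
  obtain ⟨n, c, e, hc, he, hy_sum⟩ :=
    hcorner q' ⟨hq's, hq'q'⟩ ⟨hq'p, hpq'⟩ _ (star_right_conjugate_nonneg hX v) hy hy_inv
  have he_le (j : Fin n) : e j * q' = e j := by
    rw [(he j).2.2, mul_assoc, hQ'.isIdempotentElem.eq]
  have hq'_add : IsPositiveCombination {e : A | IsStarProjection e} ((t : ℂ) • q' + b) :=
    isPositiveCombination_smul_add hQ hQ' hvv hvv' (by rw [← hq'p, mul_assoc, hpq, mul_zero])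
      hb0 hb.2.symm ht hk hqk hkq hkXk
      ⟨n, c, e, hc, fun j => ⟨⟨(he j).2.1, (he j).1.symm⟩, he_le j⟩, hy_sum⟩
  obtain ⟨N, C, E, hC, hE, hsum⟩ :=
    (IsPositiveCombination.of_mem ht (hQ'.sub_of_mul_eq_left hP hq'p)).add hq'_add
  refine ⟨N, C, E, hC, fun j => ⟨(hE j).isSelfAdjoint.star_eq.symm, (hE j).isIdempotentElem.eq⟩,
    ?_⟩
  rw [hx_def, ← hsum, smul_sub]
  abel
end
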